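/- arXiv:1602.03755 — 5 statements merged into one kernel-verified Lean document; each statement's English description precedes it below -/
import Mathlib

section
/- For the partial order consisting of a chain of n elements together with one additional incomparable element v, any 3-hitting family must contain all n+1 linearizations: for each i ∈ {0,...,n}, the schedule placing v between positions i and i+1 of the chain is the unique schedule hitting some admissible triple, so the smallest 3-hitting family has size exactly n+1. -/
/-- A schedule for a partial order is a linear extension: a linear order
relation `r` that extends the partial order. -/
def IsSchedule {α : Type*} [PartialOrder α] (r : α → α → Prop) : Prop :=
  IsLinearOrder α r ∧ ∀ x y : α, x ≤ y → r x y

/-- A schedule `r` hits the tuple `a` if it orders `a 0, a 1, ...` in this order. -/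
def Hits {α : Type*} (r : α → α → Prop) {d : ℕ} (a : Fin d → α) : Prop :=
  ∀ i j : Fin d, i < j → r (a i) (a j)

/-- A `d`-tuple of distinct events is admissible if no later component is
strictly below an earlier one. -/
def Admissible {α : Type*} [PartialOrder α] {d : ℕ} (a : Fin d → α) : Prop :=
  Function.Injective a ∧ ∀ i j : Fin d, i < j → ¬ (a j < a i)

/-- A family of schedules (indexed by `Fin k`) is `d`-hitting if every member is a
schedule and every admissible `d`-tuple is hit by some member. -/
def IsHittingFamily {α : Type*} [PartialOrder α] {k : ℕ} (F : Fin k → (α → α → Prop)) (d : ℕ) : Prop :=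
  (∀ i, IsSchedule (F i)) ∧ ∀ a : Fin d → α, Admissible a → ∃ i, Hits (F i) a

/-- The schedule for `Fin n ⊕ Unit` (chain plus incomparable `v`) that runs the chain
in order and inserts `v` right after the first `i` chain elements. -/
def insSched (n i : ℕ) : (Fin n ⊕ Unit) → (Fin n ⊕ Unit) → Prop
  | Sum.inl a, Sum.inl b => a ≤ b
  | Sum.inl a, Sum.inr _ => (a : ℕ) < i
  | Sum.inr _, Sum.inl b => i ≤ (b : ℕ)
  | Sum.inr _, Sum.inr _ => True

/-!
A schedule of the chain plus `v` is determined by where it puts `v`: if it puts `v` after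
chain element `i - 1` and before chain element `i`, it is `insSched n i`. The admissible triple
`(i - 1, v, i)` (or `(v, 0, 1)` when `i = 0`, `(n - 2, n - 1, v)` when `i = n`) forces exactly
this, so `insSched n i` is the only schedule hitting it. Conversely, an admissible tuple lists
its chain elements in increasing order and contains `v` at most once, so it is hit by the
schedule inserting `v` just after the last chain element preceding it.
-/

open Sum

theorem eq_of_forall_imp_of_total {α : Type*} {r s : α → α → Prop} [Std.Total s]
    [Std.Antisymm r] (h : ∀ x y, s x y → r x y) : r = s := by
  funext x y
  refine propext ⟨fun hr => ?_, h x y⟩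
  rcases Std.Total.total (r := s) x y with hs | hs
  · exact hs
  · obtain rfl := Std.Antisymm.antisymm x y hr (h y x hs)
    exact hs

theorem hits_vec3_iff {α : Type*} {r : α → α → Prop} {x y z : α} :
    Hits r ![x, y, z] ↔ r x y ∧ r x z ∧ r y z := by
  constructor
  · intro h
    exact ⟨h 0 1 (by decide), h 0 2 (by decide), h 1 2 (by decide)⟩
  · rintro ⟨hxy, hxz, hyz⟩ p q hpq
    fin_cases p <;> fin_cases q <;> simp_all

theorem admissible_vec3 {α : Type*} [PartialOrder α] {x y z : α}
    (hxy : x ≠ y) (hxz : x ≠ z) (hyz : y ≠ z)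
    (hyx : ¬ y < x) (hzx : ¬ z < x) (hzy : ¬ z < y) : Admissible ![x, y, z] := by
  constructor
  · intro p q h
    fin_cases p <;> fin_cases q <;> simp_all [eq_comm]
  · intro p q hpq
    fin_cases p <;> fin_cases q <;> simp_all

section ChainPlusPoint

variable {n d : ℕ}

theorem insSched_isLinearOrder (i : ℕ) : IsLinearOrder (Fin n ⊕ Unit) (insSched n i) where
  refl := by rintro (a | u) <;> simp [insSched]
  trans := by
    rintro (a | ⟨⟩) (b | ⟨⟩) (c | ⟨⟩) <;> simp only [insSched, Fin.le_def, imp_self,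
      implies_true] <;> omega
  antisymm := by
    rintro (a | ⟨⟩) (b | ⟨⟩) <;> simp only [insSched, Fin.le_def, inl.injEq, Fin.ext_iff,
      implies_true] <;> omega
  total := by
    rintro (a | ⟨⟩) (b | ⟨⟩) <;> simp only [insSched, Fin.le_def, or_self] <;> omega

theorem insSched_isSchedule (i : ℕ) : IsSchedule (insSched n i) := by
  refine ⟨insSched_isLinearOrder i, ?_⟩
  rintro (a | u) (b | v) h
  · exact inl_le_inl_iff.1 h
  · exact absurd h not_inl_le_inr
  · exact absurd h not_inr_le_inl
  · trivial

theorem insSched_injective : Function.Injective fun i : Fin (n + 1) => insSched n i := by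
  intro i j hij
  by_contra hne
  wlog hlt : i < j generalizing i j
  · exact this hij.symm (Ne.symm hne) (lt_of_le_of_ne (not_lt.1 hlt) (Ne.symm hne))
  have := congrFun₂ hij (inl ⟨i, by omega⟩) (inr ())
  simp only [insSched, eq_iff_iff] at this
  omega

theorem IsSchedule.eq_insSched {r : Fin n ⊕ Unit → Fin n ⊕ Unit → Prop} (hr : IsSchedule r)
    (i : Fin (n + 1)) (hbefore : ∀ a : Fin n, (a : ℕ) + 1 = i → r (inl a) (inr ()))
    (hafter : ∀ a : Fin n, (a : ℕ) = i → r (inr ()) (inl a)) : r = insSched n i := by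
  obtain ⟨hlin, hext⟩ := hr
  have := insSched_isLinearOrder (n := n) i
  refine eq_of_forall_imp_of_total ?_
  rintro (a | ⟨⟩) (b | ⟨⟩) h <;> simp only [insSched] at h
  · exact hext _ _ (inl_le_inl_iff.2 h)
  · exact IsTrans.trans _ (inl ⟨i - 1, by omega⟩) _
      (hext _ _ (inl_le_inl_iff.2 (Fin.le_def.2 (by dsimp only; omega))))
      (hbefore _ (by dsimp only; omega))
  · exact IsTrans.trans _ (inl ⟨i, by omega⟩) _ (hafter _ rfl)
      (hext _ _ (inl_le_inl_iff.2 (Fin.le_def.2 h)))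
  · exact Std.Refl.refl _

theorem exists_admissible_forcing_insSched (hn : 2 ≤ n) (i : Fin (n + 1)) :
    ∃ a : Fin 3 → Fin n ⊕ Unit, Admissible a ∧
      ∀ r, IsSchedule r → Hits r a → r = insSched n i := by
  rcases Nat.eq_zero_or_pos i with h0 | hpos
  · refine ⟨![inr (), inl ⟨0, by omega⟩, inl ⟨1, by omega⟩], ?_, fun r hr hits => ?_⟩
    · apply admissible_vec3 <;> simp [Fin.ext_iff, Fin.lt_def]
    · have hvx := (hits_vec3_iff.1 hits).1
      refine hr.eq_insSched i (fun a ha => by omega) fun a ha => ?_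
      rwa [show a = ⟨0, by omega⟩ from Fin.ext (by dsimp only; omega)]
  rcases (Nat.lt_succ_iff.1 i.2).lt_or_eq with hlt | hn'
  · refine ⟨![inl ⟨i - 1, by omega⟩, inr (), inl ⟨i, hlt⟩], ?_, fun r hr hits => ?_⟩
    · apply admissible_vec3 <;> simp [Fin.ext_iff, Fin.lt_def]
      omega
    · obtain ⟨hxv, -, hvy⟩ := hits_vec3_iff.1 hits
      refine hr.eq_insSched i (fun a ha => ?_) fun a ha => ?_
      · rwa [show a = ⟨i - 1, by omega⟩ from Fin.ext (by dsimp only; omega)]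
      · rwa [show a = ⟨i, hlt⟩ from Fin.ext ha]
  · refine ⟨![inl ⟨n - 2, by omega⟩, inl ⟨n - 1, by omega⟩, inr ()], ?_,
      fun r hr hits => ?_⟩
    · apply admissible_vec3 <;> simp [Fin.ext_iff, Fin.lt_def] <;> omega
    · have hxv := (hits_vec3_iff.1 hits).2.2
      refine hr.eq_insSched i (fun a ha => ?_) fun a ha => by omega
      rwa [show a = ⟨n - 1, by omega⟩ from Fin.ext (by dsimp only; omega)]

theorem Admissible.inl_lt_inl {a : Fin d → Fin n ⊕ Unit} (ha : Admissible a)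
    {p q : Fin d} (hpq : p < q) {x y : Fin n} (hx : a p = inl x) (hy : a q = inl y) :
    x < y := by
  refine lt_of_le_of_ne (not_lt.1 fun hyx => ha.2 p q hpq ?_) fun hxy => hpq.ne (ha.1 ?_)
  · rw [hx, hy]; exact inl_lt_inl_iff.2 hyx
  · rw [hx, hy, hxy]

def slotBefore (a : Fin d → Fin n ⊕ Unit) (p : Fin d) : ℕ :=
  (Finset.univ.filter (· < p)).sup fun q => Sum.elim (fun x : Fin n => (x : ℕ) + 1) 0 (a q)

theorem slotBefore_le (a : Fin d → Fin n ⊕ Unit) (p : Fin d) : slotBefore a p ≤ n := by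
  refine Finset.sup_le fun q _ => ?_
  rcases a q with x | u
  · exact x.2
  · exact Nat.zero_le n

theorem Admissible.hits_insSched {a : Fin d → Fin n ⊕ Unit} (ha : Admissible a) {i : ℕ}
    (hbefore : ∀ q q' x, q < q' → a q = inl x → a q' = inr () → (x : ℕ) < i)
    (hafter : ∀ q q' y, q < q' → a q = inr () → a q' = inl y → i ≤ (y : ℕ)) :
    Hits (insSched n i) a := by
  intro q q' hqq'
  rcases hq : a q with x | ⟨⟩ <;> rcases hq' : a q' with y | ⟨⟩
  · exact (ha.inl_lt_inl hqq' hq hq').le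
  · exact hbefore q q' x hqq' hq hq'
  · exact hafter q q' y hqq' hq hq'
  · trivial

theorem exists_insSched_hits {a : Fin d → Fin n ⊕ Unit} (ha : Admissible a) :
    ∃ i : Fin (n + 1), Hits (insSched n i) a := by
  by_cases hv : ∃ p, a p = inr ()
  · obtain ⟨p, hp⟩ := hv
    refine ⟨⟨slotBefore a p, Nat.lt_succ_of_le (slotBefore_le a p)⟩,
      ha.hits_insSched (fun q q' x hqq' hq hq' => ?_) (fun q q' y hqq' hq hq' => ?_)⟩
    · obtain rfl : q' = p := ha.1 (hq'.trans hp.symm)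
      show (x : ℕ) + 1 ≤ slotBefore a q'
      refine Finset.le_sup_of_le (Finset.mem_filter.2 ⟨Finset.mem_univ q, hqq'⟩) ?_
      rw [hq]
      rfl
    · obtain rfl : q = p := ha.1 (hq.trans hp.symm)
      show slotBefore a q ≤ y
      refine Finset.sup_le fun s hs => ?_
      rcases hz : a s with z | ⟨⟩
      · exact ha.inl_lt_inl ((Finset.mem_filter.1 hs).2.trans hqq') hz hq'
      · exact Nat.zero_le _
  · push Not at hv
    exact ⟨0, ha.hits_insSched (fun _ q' _ _ _ h => absurd h (hv q'))
      (fun q _ _ _ h _ => absurd h (hv q))⟩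

theorem insSched_isHittingFamily (d : ℕ) :
    IsHittingFamily (fun i : Fin (n + 1) => insSched n (i : ℕ)) d :=
  ⟨fun i => insSched_isSchedule i, fun _ ha => exists_insSched_hits ha⟩

end ChainPlusPoint

/-- for the chain of `n ≥ 2` elements plus one incomparable element `v`,
any `3`-hitting family must contain each of the `n + 1` schedules `insSched n i`
(`i = 0, …, n`), hence has size at least `n + 1`; moreover these `n + 1` schedules
do form a `3`-hitting family, so the smallest `3`-hitting family has size exactly `n + 1`. -/
theorem chainPlus_three_hitting_minimum (n : ℕ) (hn : 2 ≤ n) :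
    (∀ (k : ℕ) (F : Fin k → ((Fin n ⊕ Unit) → (Fin n ⊕ Unit) → Prop)),
      IsHittingFamily F 3 →
        (∀ i : Fin (n + 1), ∃ j : Fin k, F j = insSched n i) ∧ n + 1 ≤ k) ∧
    IsHittingFamily (fun i : Fin (n + 1) => insSched n (i : ℕ)) 3 := by
  refine ⟨fun k F hF => ?_, insSched_isHittingFamily 3⟩
  have hmem : ∀ i : Fin (n + 1), ∃ j, F j = insSched n i := fun i => by
    obtain ⟨a, ha, hforce⟩ := exists_admissible_forcing_insSched hn i
    obtain ⟨j, hj⟩ := hF.2 a ha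
    exact ⟨j, hforce _ (hF.1 j) hj⟩
  choose g hg using hmem
  have hg_inj : Function.Injective g := fun i i' h =>
    insSched_injective (show insSched n i = insSched n i' by rw [← hg, ← hg, h])
  exact ⟨fun i => ⟨g i, hg i⟩, by simpa using Fintype.card_le_of_injective g hg_inj⟩
end

section
/- For the complete binary tree of height h ≥ 1, viewed as the prefix order on binary strings of length at most h, the family consisting of the left-to-right DFS traversal and the right-to-left DFS traversal is a 2-hitting family, and no family of size 1 is 2-hitting; hence the smallest 2-hitting family has size exactly 2. -/
/-- The complete binary tree of height `h`: binary strings of length at most `h`. -/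
def BTree (h : ℕ) := {l : List Bool // l.length ≤ h}

/-- The prefix partial order on the complete binary tree. -/
instance BTree.instPartialOrder {h : ℕ} : PartialOrder (BTree h) where
  le x y := x.1 <+: y.1
  le_refl x := List.prefix_refl x.1
  le_trans _ _ _ h1 h2 := List.IsPrefix.trans h1 h2
  le_antisymm _ _ h1 h2 :=
    Subtype.ext (h1.eq_of_length (le_antisymm h1.length_le h2.length_le))

/-- The left-to-right DFS order on binary strings: `x` comes before `y` iff `x` is a
prefix of `y`, or `x = u ++ 0 x'` and `y = u ++ 1 y'` (with `0 = false`, `1 = true`). -/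
def dfsL (x y : List Bool) : Prop :=
  x <+: y ∨ ∃ u x' y' : List Bool, x = u ++ false :: x' ∧ y = u ++ true :: y'

/-- The right-to-left DFS order on binary strings (mirror image of `dfsL`). -/
def dfsR (x y : List Bool) : Prop :=
  x <+: y ∨ ∃ u x' y' : List Bool, x = u ++ true :: x' ∧ y = u ++ false :: y'

/-!
Both DFS traversals are lexicographic orders on words, for the letter orders `0 < 1` and `1 < 0`
respectively, so they are linear extensions of the prefix order. If `y` is not a prefix of `x`,
then either `x` is a prefix of `y` (and both traversals put `x` first) or `x` and `y` first differ
at some letter, which is `0` in one of them and `1` in the other: one of the two traversals puts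
`x` first. A single schedule cannot hit both `(0, 1)` and `(1, 0)`, which are admissible because
the words `0` and `1` are incomparable.
-/

namespace List

variable {α : Type*}

theorem eq_or_lex_iff_isPrefix_or_exists {r : α → α → Prop} {x y : List α} :
    x = y ∨ Lex r x y ↔
      x <+: y ∨ ∃ u a b x' y', r a b ∧ x = u ++ a :: x' ∧ y = u ++ b :: y' := by
  constructor
  · rintro (rfl | hlex)
    · exact Or.inl (prefix_refl x)
    induction hlex with
    | nil => exact Or.inl (nil_prefix)
    | @cons a _ _ _ ih =>
      rcases ih with hp | ⟨u, c, d, x', y', hcd, rfl, rfl⟩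
      · exact Or.inl (cons_prefix_cons.2 ⟨rfl, hp⟩)
      · exact Or.inr ⟨a :: u, c, d, x', y', hcd, rfl, rfl⟩
    | @rel a _ b _ hab => exact Or.inr ⟨[], a, b, _, _, hab, rfl, rfl⟩
  · rintro (⟨_ | ⟨c, t⟩, rfl⟩ | ⟨u, a, b, x', y', hab, rfl, rfl⟩)
    · exact Or.inl (append_nil x).symm
    · simpa using Lex.append_left r (Lex.nil (a := c) (l := t)) x
    · exact Or.inr (Lex.append_left r (Lex.rel hab) u)

-- Mathlib's order on `List α` is, by definition, `x = y ∨ Lex (· < ·) x y`.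
theorem le_iff_isPrefix_or_exists [LinearOrder α] {x y : List α} :
    x ≤ y ↔ x <+: y ∨ ∃ u a b x' y', a < b ∧ x = u ++ a :: x' ∧ y = u ++ b :: y' :=
  eq_or_lex_iff_isPrefix_or_exists

end List

open List

theorem dfsL_iff_le {x y : List Bool} : dfsL x y ↔ x ≤ y := by
  simp only [dfsL, le_iff_isPrefix_or_exists, Bool.lt_iff]
  constructor
  · rintro (hp | ⟨u, x', y', hx, hy⟩)
    exacts [Or.inl hp, Or.inr ⟨u, _, _, x', y', ⟨rfl, rfl⟩, hx, hy⟩]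
  · rintro (hp | ⟨u, _, _, x', y', ⟨rfl, rfl⟩, hx, hy⟩)
    exacts [Or.inl hp, Or.inr ⟨u, x', y', hx, hy⟩]

theorem dfsR_iff_le {x y : List Boolᵒᵈ} : dfsR x y ↔ x ≤ y := by
  rw [le_iff_isPrefix_or_exists]
  constructor
  · rintro (hp | ⟨u, x', y', hx, hy⟩)
    exacts [Or.inl hp, Or.inr ⟨u, true, false, x', y', Bool.false_lt_true, hx, hy⟩]
  · rintro (hp | ⟨u, a, b, x', y', hab, hx, hy⟩)
    · exact Or.inl hp
    · obtain ⟨rfl, rfl⟩ : b = false ∧ a = true := (Bool.lt_iff (x := b) (y := a)).1 hab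
      exact Or.inr ⟨u, x', y', hx, hy⟩

instance : IsLinearOrder (List Bool) dfsL := by
  rw [show dfsL = (· ≤ ·) from funext₂ fun _ _ => propext dfsL_iff_le]
  infer_instance

instance : IsLinearOrder (List Bool) dfsR := by
  rw [show dfsR = fun x y : List Boolᵒᵈ => x ≤ y from funext₂ fun _ _ => propext dfsR_iff_le]
  exact (inferInstance : IsLinearOrder (List Boolᵒᵈ) (· ≤ ·))

theorem dfsL_or_dfsR_of_not_isPrefix {x y : List Bool} (h : ¬ y <+: x) : dfsL x y ∨ dfsR x y := by
  rcases le_total x y with hxy | hyx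
  · exact Or.inl (dfsL_iff_le.2 hxy)
  · rcases le_iff_isPrefix_or_exists.1 hyx with hp | ⟨u, a, b, y', x', hab, hy, hx⟩
    · exact absurd hp h
    · obtain ⟨rfl, rfl⟩ := Bool.lt_iff.1 hab
      exact Or.inr (Or.inr ⟨u, x', y', hx, hy⟩)

section

variable {α : Type*}

theorem hits_fin_two_iff {r : α → α → Prop} {a : Fin 2 → α} : Hits r a ↔ r (a 0) (a 1) := by
  refine ⟨fun h => h 0 1 Fin.zero_lt_one, fun h i j hij => ?_⟩
  fin_cases i <;> fin_cases j <;> simp_all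

theorem admissible_fin_two_iff [PartialOrder α] {a : Fin 2 → α} :
    Admissible a ↔ a 0 ≠ a 1 ∧ ¬ a 1 < a 0 := by
  refine ⟨fun h => ⟨fun h01 => zero_ne_one (h.1 h01), h.2 0 1 Fin.zero_lt_one⟩, fun h => ⟨?_, ?_⟩⟩
  · intro i j hij
    fin_cases i <;> fin_cases j <;> simp_all [eq_comm]
  · intro i j hij
    fin_cases i <;> fin_cases j <;> simp_all

theorem not_isHittingFamily_fin_one_of_incompRel [PartialOrder α] {x y : α}
    (hxy : IncompRel (· ≤ ·) x y) (F : Fin 1 → α → α → Prop) : ¬ IsHittingFamily F 2 := by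
  rintro ⟨hsched, hhit⟩
  have hadm : ∀ {u v : α}, IncompRel (· ≤ ·) u v → Admissible ![u, v] := fun huv =>
    admissible_fin_two_iff.2 ⟨fun h => huv.1 h.le, fun h => huv.2 h.le⟩
  obtain ⟨i, hi⟩ := hhit _ (hadm hxy)
  obtain ⟨j, hj⟩ := hhit _ (hadm hxy.symm)
  rw [hits_fin_two_iff] at hi hj
  rw [Subsingleton.elim j i] at hj
  have := (hsched i).1
  exact hxy.1 (antisymm (r := F i) hi hj).le

end

theorem BTree.isSchedule_of_isPrefix_imp {h : ℕ} (r : List Bool → List Bool → Prop)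
    [IsLinearOrder (List Bool) r] (hr : ∀ x y, x <+: y → r x y) :
    IsSchedule (fun x y : BTree h => r x.1 y.1) :=
  ⟨(RelEmbedding.preimage ⟨Subtype.val, Subtype.val_injective⟩ r).isLinearOrder,
    fun x y => hr x.1 y.1⟩

/-- for the complete binary tree of height `h ≥ 1` with the prefix order,
the two DFS traversals form a `2`-hitting family, and no single schedule is a
`2`-hitting family; hence the smallest `2`-hitting family has size exactly `2`. -/
theorem btree_two_hitting (h : ℕ) (hh : 1 ≤ h) :
    IsHittingFamily
      (![fun x y : BTree h => dfsL x.1 y.1, fun x y : BTree h => dfsR x.1 y.1]) 2 ∧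
    ∀ F : Fin 1 → (BTree h → BTree h → Prop), ¬ IsHittingFamily F 2 := by
  refine ⟨⟨fun i => ?_, fun a ha => ?_⟩, fun F => ?_⟩
  · fin_cases i
    exacts [BTree.isSchedule_of_isPrefix_imp dfsL fun _ _ => Or.inl,
      BTree.isSchedule_of_isPrefix_imp dfsR fun _ _ => Or.inl]
  · obtain ⟨hne, hnlt⟩ := admissible_fin_two_iff.1 ha
    have hnle : ¬ (a 1).1 <+: (a 0).1 := fun hle => hnlt (lt_of_le_of_ne hle hne.symm)
    rcases dfsL_or_dfsR_of_not_isPrefix hnle with hL | hR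
    exacts [⟨0, hits_fin_two_iff.2 hL⟩, ⟨1, hits_fin_two_iff.2 hR⟩]
  · refine not_isHittingFamily_fin_one_of_incompRel (x := ⟨[false], hh⟩) (y := ⟨[true], hh⟩) ?_ F
    exact ⟨by simp [LE.le], by simp [LE.le]⟩
end

section
/- For every d ≥ 3, the complete binary tree T^h on n = 2^{h+1} − 1 nodes admits a d-hitting family of schedules of size at most 2·n^{d−2}. -/
/-!
Given an admissible tuple `(a₀, …, a_{m+1})`, schedule first every node below `a₀`, then every
remaining node below `a₁`, and so on up to `a_{m-1}`, and only then the rest; inside each block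
the nodes follow a fixed linear extension of the tree order. Admissibility makes `aᵢ` the first
entry of the tuple in the `i`-th block for `i < m`, so the first `m` entries come out in order,
while `a_m` and `a_{m+1}` both land in the last block. As `a_{m+1}` is not a proper ancestor of
`a_m`, left-to-right or right-to-left DFS puts `a_m` first. So two schedules for each of the
`n ^ m` choices of `(a₀, …, a_{m-1})` suffice.
-/

open Function

section Schedules

variable {α : Type*} [PartialOrder α]

theorem Admissible.not_le {d : ℕ} {a : Fin d → α} (ha : Admissible a) {i j : Fin d}
    (hij : i < j) : ¬ a j ≤ a i := fun hle =>
  hle.lt_or_eq.elim (ha.2 i j hij) fun heq => hij.ne' (ha.1 heq)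

theorem isSchedule_of_injective_of_monotone {γ : Type*} [LinearOrder γ] {g : α → γ}
    (hinj : Injective g) (hmono : Monotone g) : IsSchedule fun x y => g x ≤ g y :=
  ⟨{ refl := fun _ => le_rfl
     trans := fun _ _ _ => le_trans
     antisymm := fun _ _ hxy hyx => hinj (le_antisymm hxy hyx)
     total := fun _ _ => le_total _ _ },
    fun _ _ hxy => hmono hxy⟩

theorem IsHittingFamily.of_fintype {ι : Type*} [Fintype ι] {G : ι → α → α → Prop}
    {d : ℕ} (hG : ∀ i, IsSchedule (G i))
    (hhit : ∀ a : Fin d → α, Admissible a → ∃ i, Hits (G i) a) :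
    IsHittingFamily (G ∘ (Fintype.equivFin ι).symm) d :=
  ⟨fun _ => hG _, fun a ha =>
    let ⟨i, hi⟩ := hhit a ha
    ⟨Fintype.equivFin ι i, by simpa using hi⟩⟩

variable {m : ℕ} {v : Fin m → α} {x y : α}

noncomputable def firstAbove (v : Fin m → α) (x : α) : ℕ :=
  sInf {i | i = m ∨ ∃ hi : i < m, x ≤ v ⟨i, hi⟩}

theorem firstAbove_spec (v : Fin m → α) (x : α) :
    firstAbove v x = m ∨ ∃ hi : firstAbove v x < m, x ≤ v ⟨firstAbove v x, hi⟩ :=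
  Nat.sInf_mem (s := {i | i = m ∨ ∃ hi : i < m, x ≤ v ⟨i, hi⟩}) ⟨m, Or.inl rfl⟩

theorem firstAbove_le_length : firstAbove v x ≤ m :=
  Nat.sInf_le (Or.inl rfl)

theorem firstAbove_le_of_le {i : Fin m} (hxi : x ≤ v i) : firstAbove v x ≤ i :=
  Nat.sInf_le (Or.inr ⟨i.2, hxi⟩)

theorem firstAbove_mono : Monotone (firstAbove v) := by
  intro x y hxy
  rcases firstAbove_spec v y with hm | ⟨hi, hle⟩
  · rw [hm]
    exact firstAbove_le_length
  · exact firstAbove_le_of_le (i := ⟨_, hi⟩) (hxy.trans hle)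

theorem firstAbove_castAdd_of_admissible {a : Fin (m + 2) → α} (ha : Admissible a)
    (i : Fin (m + 2)) :
    firstAbove (fun k : Fin m => a (Fin.castAdd 2 k)) (a i) = min (i : ℕ) m := by
  refine le_antisymm (le_min ?_ firstAbove_le_length) ?_
  · rcases lt_or_ge (i : ℕ) m with him | him
    · exact firstAbove_le_of_le (i := ⟨i, him⟩) le_rfl
    · exact firstAbove_le_length.trans him
  · rcases firstAbove_spec (fun k : Fin m => a (Fin.castAdd 2 k)) (a i) with hm | ⟨hj, hle⟩
    · rw [hm]
      exact min_le_right _ _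
    · by_contra! hlt
      exact ha.not_le (i := Fin.castAdd 2 ⟨_, hj⟩) (j := i) (by simp [Fin.lt_def]; omega) hle

variable {β : Type*} [LinearOrder β]

def guidedSchedule (f : α → β) (v : Fin m → α) (x y : α) : Prop :=
  toLex (firstAbove v x, f x) ≤ toLex (firstAbove v y, f y)

theorem isSchedule_guidedSchedule {f : α → β} (hinj : Injective f) (hmono : Monotone f)
    (v : Fin m → α) : IsSchedule (guidedSchedule f v) :=
  isSchedule_of_injective_of_monotone
    (fun _ _ hxy => hinj (congrArg (fun p => (ofLex p).2) hxy))
    (Prod.Lex.toLex_mono.comp (firstAbove_mono.prodMk hmono))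

theorem hits_guidedSchedule {f : α → β} {a : Fin (m + 2) → α} (ha : Admissible a)
    (hlast : f (a (Fin.last m).castSucc) ≤ f (a (Fin.last (m + 1)))) :
    Hits (guidedSchedule f fun k : Fin m => a (Fin.castAdd 2 k)) a := by
  intro i j hij
  rw [guidedSchedule, Prod.Lex.toLex_le_toLex, firstAbove_castAdd_of_admissible ha,
    firstAbove_castAdd_of_admissible ha]
  have hij' : (i : ℕ) < j := hij
  rcases lt_or_ge (i : ℕ) m with him | him
  · exact Or.inl (by omega)
  · obtain rfl : i = (Fin.last m).castSucc := Fin.ext (by simp; omega)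
    obtain rfl : j = Fin.last (m + 1) := Fin.ext (by simp; omega)
    exact Or.inr ⟨by simp, hlast⟩

end Schedules

theorem dfsL_of_lt {x y : List Bool} (hlt : x < y) : dfsL x y := by
  have hlex : List.Lex (· < ·) x y := hlt
  clear hlt
  induction hlex with
  | nil => exact Or.inl List.nil_prefix
  | @rel a l₁ b l₂ hab =>
    obtain ⟨rfl, rfl⟩ : a = false ∧ b = true := by revert hab; cases a <;> cases b <;> decide
    exact Or.inr ⟨[], l₁, l₂, rfl, rfl⟩
  | @cons a l₁ l₂ _ ih =>
    rcases ih with hp | ⟨u, x', y', rfl, rfl⟩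
    · exact Or.inl (List.cons_prefix_cons.mpr ⟨rfl, hp⟩)
    · exact Or.inr ⟨a :: u, x', y', rfl, rfl⟩

namespace BTree

variable {h : ℕ}

/-- Lexicographic order on `dfsKey false` is left-to-right DFS (`dfsL_of_lt`), on `dfsKey true`
right-to-left DFS. -/
def dfsKey (s : Bool) (x : List Bool) : List Bool :=
  if s then x.map not else x

theorem dfsKey_injective (s : Bool) : Injective fun x : BTree h => dfsKey s x.1 := by
  cases s
  · exact Subtype.val_injective
  · exact (List.map_injective_iff.2 Bool.not_injective).comp Subtype.val_injective

theorem dfsKey_monotone (s : Bool) : Monotone fun x : BTree h => dfsKey s x.1 := by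
  intro x y (hxy : x.1 <+: y.1)
  cases s
  · exact not_lt.1 hxy.le
  · exact not_lt.1 (hxy.map not).le

theorem exists_dfsKey_le {x y : BTree h} (hyx : ¬ y < x) :
    ∃ s, dfsKey s x.1 ≤ dfsKey s y.1 := by
  rcases le_or_gt x.1 y.1 with hle | hlt
  · exact ⟨false, hle⟩
  · rcases dfsL_of_lt hlt with hp | ⟨u, y', x', hy, hx⟩
    · have hne : y ≠ x := fun h => hlt.ne (congrArg Subtype.val h)
      exact absurd (lt_of_le_of_ne (show y ≤ x from hp) hne) hyx
    · refine ⟨true, le_of_lt ?_⟩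
      simp only [dfsKey, if_true, hx, hy, List.map_append, List.map_cons, Bool.not_true,
        Bool.not_false]
      exact List.Lex.append_left _ (List.Lex.rel (by decide)) _

def equivSigma : BTree h ≃ Σ i : Fin (h + 1), (Fin i → Bool) where
  toFun x := ⟨⟨x.1.length, Nat.lt_succ_of_le x.2⟩, fun j => x.1.get j⟩
  invFun p := ⟨List.ofFn p.2, by simpa using Nat.le_of_lt_succ p.1.2⟩
  left_inv x := Subtype.ext (List.ofFn_get x.1)
  right_inv := by
    rintro ⟨⟨i, hi⟩, f⟩
    refine Sigma.ext (by simp) ((Fin.heq_fun_iff (by simp)).2 fun j => ?_)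
    simp

noncomputable instance : Fintype (BTree h) :=
  Fintype.ofEquiv _ equivSigma.symm

theorem card_eq_two_pow_sub_one : Fintype.card (BTree h) = 2 ^ (h + 1) - 1 := by
  simp [Fintype.card_congr equivSigma, Fintype.card_sigma,
    Fin.sum_univ_eq_sum_range (fun i => 2 ^ i), Nat.geomSum_eq le_rfl]

end BTree

/-- for every `d ≥ 3`, the complete binary tree of height `h`,
which has `n = 2 ^ (h + 1) - 1` nodes, admits a `d`-hitting family of schedules of
size at most `2 · n ^ (d - 2)`. -/
theorem btree_hitting_family_le (h d : ℕ) (hd : 3 ≤ d) :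
    ∃ (k : ℕ) (F : Fin k → (BTree h → BTree h → Prop)),
      k ≤ 2 * (2 ^ (h + 1) - 1) ^ (d - 2) ∧ IsHittingFamily F d := by
  obtain ⟨m, rfl⟩ : ∃ m, d = m + 2 := ⟨d - 2, by omega⟩
  let G (p : Bool × (Fin m → BTree h)) :=
    guidedSchedule (fun x : BTree h => BTree.dfsKey p.1 x.1) p.2
  refine ⟨_, _, le_of_eq ?_, IsHittingFamily.of_fintype (G := G) ?_ ?_⟩
  · simp [BTree.card_eq_two_pow_sub_one]
  · exact fun p =>
      isSchedule_guidedSchedule (BTree.dfsKey_injective _) (BTree.dfsKey_monotone _) _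
  · intro a ha
    obtain ⟨s, hs⟩ := BTree.exists_dfsKey_le (ha.2 _ _ (Fin.castSucc_lt_last (Fin.last m)))
    exact ⟨(s, _), hits_guidedSchedule ha hs⟩
end

section
/- For all n ≥ d ≥ 2, if k satisfies n^d · (1 − 1/d!)^k < 1, then there exists a d-hitting family of size k for the antichain on n elements; in particular a d-hitting family of size at most ⌈d!·d·ln n⌉ exists. -/
/-- The antichain on `n` elements: `n` pairwise incomparable events. -/
def Antichain (n : ℕ) := Fin n

/-- The discrete partial order on the antichain: distinct elements are incomparable. -/
instance Antichain.instPartialOrder {n : ℕ} : PartialOrder (Antichain n) where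
  le x y := x = y
  le_refl _ := rfl
  le_trans _ _ _ h1 h2 := Eq.trans h1 h2
  le_antisymm _ _ h _ := h



open Function Finset

def HitP {n d : ℕ} (σ : Equiv.Perm (Fin n)) (a : Fin d → Fin n) : Prop :=
  ∀ i j : Fin d, i < j → σ.symm (a i) < σ.symm (a j)

instance {n d : ℕ} (σ : Equiv.Perm (Fin n)) (a : Fin d → Fin n) : Decidable (HitP σ a) :=
  inferInstanceAs (Decidable (∀ i j : Fin d, i < j → σ.symm (a i) < σ.symm (a j)))

lemma count_hit {n d : ℕ} (a : Fin d → Fin n) (ha : Function.Injective a) :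
    Nat.factorial n ≤ Nat.factorial d *
      (Finset.univ.filter (fun σ : Equiv.Perm (Fin n) => HitP σ a)).card := by
  classical
  set H := Finset.univ.filter (fun σ : Equiv.Perm (Fin n) => HitP σ a) with hHdef
  set em : Fin d ↪ Fin n := ⟨a, ha⟩ with hem
  set τ : Equiv.Perm (Fin n) → Equiv.Perm (Fin d) :=
    fun σ => Tuple.sort (fun i => σ.symm (a i)) with hτ
  set π : Equiv.Perm (Fin d) → Equiv.Perm (Fin n) :=
    fun t => t.viaFintypeEmbedding em with hπ
  have hσ0 : ∀ σ : Equiv.Perm (Fin n), HitP (σ.trans (π (τ σ)).symm) a := by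
    intro σ
    set p : Fin d → Fin n := fun i => σ.symm (a i) with hp
    have hpinj : Function.Injective p := σ.symm.injective.comp ha
    have hmono : Monotone (p ∘ (τ σ)) := Tuple.monotone_sort p
    have hsm : StrictMono (p ∘ (τ σ)) :=
      hmono.strictMono_of_injective (hpinj.comp (τ σ).injective)
    intro i j hij
    have key : ∀ i, (σ.trans (π (τ σ)).symm).symm (a i) = p ((τ σ) i) := by
      intro i
      have : (π (τ σ)) (a i) = a ((τ σ) i) := by
        have := Equiv.Perm.viaFintypeEmbedding_apply_image (τ σ) em i
        simpa [hem] using this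
      simp [Equiv.symm_trans_apply, this, hp]
    rw [key i, key j]
    exact hsm hij
  set Ψ : Equiv.Perm (Fin n) → Equiv.Perm (Fin d) × {σ // σ ∈ H} :=
    fun σ => (τ σ, ⟨σ.trans (π (τ σ)).symm, by
      simp only [hHdef, Finset.mem_filter, Finset.mem_univ, true_and]
      exact hσ0 σ⟩) with hΨ
  have hinj : Function.Injective Ψ := by
    intro σ σ' h
    have h1 : τ σ = τ σ' := congrArg Prod.fst h
    have h2 : σ.trans (π (τ σ)).symm = σ'.trans (π (τ σ')).symm :=
      congrArg (fun x => (x.2 : {σ // σ ∈ H}).val) h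
    rw [h1] at h2
    have h3 := congrArg (fun e : Equiv.Perm (Fin n) => e.trans (π (τ σ'))) h2
    simpa [Equiv.trans_assoc] using h3
  have := Fintype.card_le_of_injective Ψ hinj
  simpa [Fintype.card_perm, Fintype.card_prod, Fintype.card_coe, Fintype.card_fin] using this

lemma exists_hit_family {n d : ℕ} (k : ℕ) (hdn : d ≤ n)
    (hnum : (n : ℝ) ^ d * (1 - 1 / (Nat.factorial d : ℝ)) ^ k < 1) :
    ∃ G : Fin k → Equiv.Perm (Fin n), ∀ a : Fin d → Fin n, Function.Injective a →
      ∃ i, HitP (G i) a := by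
  classical
  set m := Nat.factorial n / Nat.factorial d with hmdef
  have hdvd : Nat.factorial d ∣ Nat.factorial n := Nat.factorial_dvd_factorial hdn
  have hm : Nat.factorial d * m = Nat.factorial n := Nat.mul_div_cancel' hdvd
  have hdpos : 0 < Nat.factorial d := Nat.factorial_pos d
  have hmle : m ≤ Nat.factorial n := by
    calc m ≤ Nat.factorial d * m := Nat.le_mul_of_pos_left m hdpos
    _ = Nat.factorial n := hm
  -- the key numeric inequality in ℕ
  have key : n ^ d * (Nat.factorial n - m) ^ k < (Nat.factorial n) ^ k := by
    have hnfpos : (0:ℝ) < (Nat.factorial n : ℝ) := by exact_mod_cast Nat.factorial_pos n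
    have hcast : ((Nat.factorial n - m : ℕ) : ℝ)
        = (Nat.factorial n : ℝ) * (1 - 1 / (Nat.factorial d : ℝ)) := by
      have h1 : ((Nat.factorial n - m : ℕ) : ℝ) = (Nat.factorial n : ℝ) - (m : ℝ) :=
        Nat.cast_sub hmle
      have h2 : (Nat.factorial d : ℝ) * (m : ℝ) = (Nat.factorial n : ℝ) := by
        exact_mod_cast hm
      have hd0 : (Nat.factorial d : ℝ) ≠ 0 := by positivity
      rw [h1]
      field_simp
      linarith [h2]
    have hreal : (n:ℝ) ^ d * ((Nat.factorial n - m : ℕ) : ℝ) ^ k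
        < ((Nat.factorial n : ℕ) : ℝ) ^ k := by
      rw [hcast, mul_pow]
      calc (n:ℝ) ^ d * ((Nat.factorial n:ℝ) ^ k * (1 - 1 / (Nat.factorial d : ℝ)) ^ k)
          = ((n:ℝ) ^ d * (1 - 1 / (Nat.factorial d : ℝ)) ^ k) * (Nat.factorial n:ℝ) ^ k := by
            ring
        _ < 1 * (Nat.factorial n:ℝ) ^ k := by
            exact mul_lt_mul_of_pos_right hnum (by positivity)
        _ = (Nat.factorial n:ℝ) ^ k := one_mul _
    exact_mod_cast hreal
  by_contra hcon
  push_neg at hcon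
  set Bad : (Fin d → Fin n) → Finset (Equiv.Perm (Fin n)) :=
    fun a => Finset.univ.filter (fun σ => ¬ HitP σ a) with hBadDef
  have hBad : ∀ a : Fin d → Fin n, Function.Injective a →
      (Bad a).card ≤ Nat.factorial n - m := by
    intro a ha
    have hHm : m ≤ (Finset.univ.filter (fun σ : Equiv.Perm (Fin n) => HitP σ a)).card := by
      have := count_hit a ha
      have h2 : Nat.factorial d * m ≤ Nat.factorial d *
          (Finset.univ.filter (fun σ : Equiv.Perm (Fin n) => HitP σ a)).card := by
        rw [hm]; exact this
      exact Nat.le_of_mul_le_mul_left h2 hdpos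
    have hcards := Finset.card_filter_add_card_filter_not
      (s := (Finset.univ : Finset (Equiv.Perm (Fin n)))) (p := fun σ => HitP σ a)
    rw [Finset.card_univ, Fintype.card_perm, Fintype.card_fin] at hcards
    simp only [hBadDef]
    omega
  have hsub : (Finset.univ : Finset (Fin k → Equiv.Perm (Fin n))) ⊆
      (Finset.univ.filter (fun a : Fin d → Fin n => Function.Injective a)).biUnion
        (fun a => Fintype.piFinset (fun _ : Fin k => Bad a)) := by
    intro G _
    obtain ⟨a, ha, hGa⟩ := hcon G
    refine Finset.mem_biUnion.2 ⟨a, Finset.mem_filter.2 ⟨Finset.mem_univ _, ha⟩, ?_⟩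
    exact Fintype.mem_piFinset.2 fun i =>
      Finset.mem_filter.2 ⟨Finset.mem_univ _, hGa i⟩
  have hcontr : (Nat.factorial n) ^ k ≤ n ^ d * (Nat.factorial n - m) ^ k := by
    calc (Nat.factorial n) ^ k
        = (Finset.univ : Finset (Fin k → Equiv.Perm (Fin n))).card := by
          simp [Finset.card_univ, Fintype.card_fun, Fintype.card_perm, Fintype.card_fin]
      _ ≤ ((Finset.univ.filter (fun a : Fin d → Fin n => Function.Injective a)).biUnion
            (fun a => Fintype.piFinset (fun _ : Fin k => Bad a))).card :=
          Finset.card_le_card hsub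
      _ ≤ ∑ a ∈ Finset.univ.filter (fun a : Fin d → Fin n => Function.Injective a),
            (Fintype.piFinset (fun _ : Fin k => Bad a)).card := Finset.card_biUnion_le
      _ ≤ ∑ a ∈ Finset.univ.filter (fun a : Fin d → Fin n => Function.Injective a),
            (Nat.factorial n - m) ^ k := by
          refine Finset.sum_le_sum fun a haa => ?_
          rw [Fintype.card_piFinset]
          simp only [Finset.prod_const, Finset.card_univ, Fintype.card_fin]
          exact Nat.pow_le_pow_left (hBad a (Finset.mem_filter.1 haa).2) k
      _ ≤ (Finset.univ.filter (fun a : Fin d → Fin n => Function.Injective a)).card *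
            (Nat.factorial n - m) ^ k := by rw [Finset.sum_const, smul_eq_mul]
      _ ≤ n ^ d * (Nat.factorial n - m) ^ k := by
          refine Nat.mul_le_mul_right _ ?_
          calc (Finset.univ.filter (fun a : Fin d → Fin n => Function.Injective a)).card
              ≤ (Finset.univ : Finset (Fin d → Fin n)).card := Finset.card_filter_le _ _
            _ = n ^ d := by simp [Finset.card_univ, Fintype.card_fun, Fintype.card_fin]
  exact absurd key (not_lt.2 hcontr)

lemma numeric_bound {n d : ℕ} (hd : 2 ≤ d) (hn : d ≤ n) :
    (n : ℝ) ^ d * (1 - 1 / (Nat.factorial d : ℝ)) ^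
      ⌈(Nat.factorial d : ℝ) * d * Real.log n⌉₊ < 1 := by
  set D : ℝ := (Nat.factorial d : ℝ) with hD
  have hD2 : (2:ℝ) ≤ D := by
    have : 2 ≤ Nat.factorial d := le_trans hd (Nat.self_le_factorial d)
    rw [hD]; exact_mod_cast this
  have hDpos : 0 < D := by linarith
  have hn2 : (2:ℝ) ≤ (n:ℝ) := by exact_mod_cast le_trans hd hn
  have hlog : 0 < Real.log n := Real.log_pos (by linarith)
  set k : ℕ := ⌈D * d * Real.log n⌉₊ with hk
  have hkge : D * d * Real.log n ≤ (k:ℝ) := Nat.le_ceil _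
  have hkpos : 0 < k := by
    rw [hk]
    refine Nat.ceil_pos.2 ?_
    have : (0:ℝ) < (d:ℝ) := by positivity
    positivity
  have hbase0 : (0:ℝ) ≤ 1 - 1 / D := by
    have : 1 / D ≤ 1 / 2 := by
      apply div_le_div_of_nonneg_left <;> linarith
    linarith
  have hstep1 : (1 - 1 / D) < Real.exp (-(1/D)) := by
    have hne : -(1/D) ≠ 0 := by
      have h0 : (0:ℝ) < 1/D := by positivity
      intro hc
      rw [neg_eq_zero] at hc
      linarith
    have := Real.add_one_lt_exp hne
    linarith
  have hstep2 : (1 - 1 / D) ^ k < Real.exp (-(1/D)) ^ k :=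
    pow_lt_pow_left₀ hstep1 hbase0 (Nat.pos_iff_ne_zero.1 hkpos)
  have hstep3 : Real.exp (-(1/D)) ^ k = Real.exp (-(k / D)) := by
    rw [← Real.exp_nat_mul]
    congr 1
    field_simp
  have hstep4 : Real.exp (-((k:ℝ) / D)) ≤ Real.exp (-((d:ℝ) * Real.log n)) := by
    apply Real.exp_le_exp.2
    rw [neg_le_neg_iff]
    rw [le_div_iff₀ hDpos]
    calc (d:ℝ) * Real.log n * D = D * (d:ℝ) * Real.log n := by ring
      _ ≤ (k:ℝ) := hkge
  have hfinal : (n:ℝ) ^ d * Real.exp (-((d:ℝ) * Real.log n)) = 1 := by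
    rw [Real.exp_neg, Real.exp_nat_mul, Real.exp_log (by linarith : (0:ℝ) < (n:ℝ))]
    exact mul_inv_cancel₀ (by positivity)
  have hnd : (0:ℝ) < (n:ℝ)^d := by positivity
  calc (n:ℝ) ^ d * (1 - 1 / D) ^ k
      < (n:ℝ) ^ d * Real.exp (-((k:ℝ) / D)) := by
        rw [← hstep3]
        exact mul_lt_mul_of_pos_left hstep2 hnd
    _ ≤ (n:ℝ) ^ d * Real.exp (-((d:ℝ) * Real.log n)) :=
        mul_le_mul_of_nonneg_left hstep4 (le_of_lt hnd)
    _ = 1 := hfinal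

/-- probabilistic method for antichains. For `n ≥ d ≥ 2`: if
`n^d · (1 − 1/d!)^k < 1` then the antichain on `n` elements has a `d`-hitting family
of size `k`; in particular it has a `d`-hitting family of size at most `⌈d! · d · ln n⌉`. -/
theorem antichain_hitting_probabilistic (n d : ℕ) (hd : 2 ≤ d) (hn : d ≤ n) :
    (∀ k : ℕ, (n : ℝ) ^ d * (1 - 1 / (Nat.factorial d : ℝ)) ^ k < 1 →
      ∃ F : Fin k → (Antichain n → Antichain n → Prop), IsHittingFamily F d) ∧
    (∃ k : ℕ, k ≤ ⌈(Nat.factorial d : ℝ) * d * Real.log n⌉₊ ∧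
      ∃ F : Fin k → (Antichain n → Antichain n → Prop), IsHittingFamily F d) := by
  classical
  have main : ∀ k : ℕ, (n : ℝ) ^ d * (1 - 1 / (Nat.factorial d : ℝ)) ^ k < 1 →
      ∃ F : Fin k → (Antichain n → Antichain n → Prop), IsHittingFamily F d := by
    intro k hk
    obtain ⟨G, hG⟩ := exists_hit_family k hn hk
    refine ⟨fun i x y => ((G i).symm x : Fin n) ≤ (G i).symm y, ?_, ?_⟩
    · intro i
      refine ⟨?_, ?_⟩
      · haveI : IsRefl (Antichain n) (fun x y => ((G i).symm x : Fin n) ≤ (G i).symm y) :=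
          ⟨fun x => le_refl _⟩
        haveI : IsTrans (Antichain n) (fun x y => ((G i).symm x : Fin n) ≤ (G i).symm y) :=
          ⟨fun a b c h1 h2 => le_trans h1 h2⟩
        haveI : IsAntisymm (Antichain n) (fun x y => ((G i).symm x : Fin n) ≤ (G i).symm y) :=
          ⟨fun x y h1 h2 => (G i).symm.injective (le_antisymm h1 h2)⟩
        haveI : IsTotal (Antichain n) (fun x y => ((G i).symm x : Fin n) ≤ (G i).symm y) :=
          ⟨fun x y => le_total _ _⟩
        haveI : IsPreorder (Antichain n) (fun x y => ((G i).symm x : Fin n) ≤ (G i).symm y) := ⟨⟩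
        haveI : IsPartialOrder (Antichain n) (fun x y => ((G i).symm x : Fin n) ≤ (G i).symm y) := ⟨⟩
        exact ⟨⟩
      intro x y hxy
      have hxy' : x = y := hxy
      subst hxy'
      exact le_refl _
    · intro a hadm
      obtain ⟨i, hi⟩ := hG (fun j => (a j : Fin n)) hadm.1
      exact ⟨i, fun p q hpq => le_of_lt (hi p q hpq)⟩
  refine ⟨main, ⟨_, le_refl _, main _ (numeric_bound hd hn)⟩⟩
end

section
/- Any 3-hitting family of permutations for the antichain on n elements has size at least log_2(n − 1). -/
namespace IsHittingFamily

variable {α : Type*} [PartialOrder α] {k : ℕ} {F : Fin k → α → α → Prop}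

theorem exists_before_not_before (hF : IsHittingFamily F 3) {x p y : α}
    (hadm : Admissible ![x, p, y]) (hyp : y ≠ p) : ∃ i, F i x p ∧ ¬ F i y p := by
  obtain ⟨i, hi⟩ := hF.2 _ hadm
  have hxp : F i x p := hi 0 1 (by decide)
  have hpy : F i p y := hi 1 2 (by decide)
  exact ⟨i, hxp, fun hyp_before => hyp ((hF.1 i).1.antisymm _ _ hyp_before hpy)⟩

theorem card_sub_one_le_two_pow [Fintype α] (hF : IsHittingFamily F 3) (p : α)
    (hadm : ∀ x y, x ≠ y → x ≠ p → y ≠ p → Admissible ![x, p, y]) :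
    Fintype.card α - 1 ≤ 2 ^ k := by
  classical
  let record : {x // x ≠ p} → Fin k → Prop := fun x i => F i x p
  have hrecord : Function.Injective record := by
    intro x y hxy
    by_contra hne
    obtain ⟨i, hx, hy⟩ := hF.exists_before_not_before
      (hadm x y (Subtype.coe_ne_coe.mpr hne) x.2 y.2) y.2
    exact hy ((congrFun hxy i).mp hx)
  simpa using Fintype.card_le_of_injective record hrecord

end IsHittingFamily

namespace Antichain

instance instFintype (n : ℕ) : Fintype (Antichain n) := inferInstanceAs (Fintype (Fin n))

theorem card (n : ℕ) : Fintype.card (Antichain n) = n := Fintype.card_fin n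

theorem not_lt {n : ℕ} (x y : Antichain n) : ¬ x < y := fun h => h.2 h.1.symm

theorem admissible_of_injective {n d : ℕ} {a : Fin d → Antichain n}
    (ha : Function.Injective a) : Admissible a :=
  ⟨ha, fun _ _ _ => not_lt _ _⟩

theorem admissible_triple {n : ℕ} {x p y : Antichain n} (hxy : x ≠ y) (hxp : x ≠ p)
    (hyp : y ≠ p) : Admissible ![x, p, y] :=
  admissible_of_injective fun i j => by
    fin_cases i <;> fin_cases j <;> simp [hxy, hxp, hyp, hxy.symm, hxp.symm, hyp.symm]

end Antichain

theorem Real.logb_le_of_abs_le_pow {b x : ℝ} {k : ℕ} (hb : 1 < b) (hx : |x| ≤ b ^ k) :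
    Real.logb b x ≤ k := by
  rw [← Real.logb_abs]
  rcases (abs_nonneg x).eq_or_lt with h0 | hpos
  · simp [← h0]
  · calc Real.logb b |x| ≤ Real.logb b (b ^ k) := Real.logb_le_logb_of_le hb hpos hx
      _ = k := by rw [Real.logb_pow, Real.logb_self_eq_one hb, mul_one]

/-- any `3`-hitting family of schedules for the antichain on `n`
elements has size at least `log₂ (n − 1)`. -/
theorem antichain_three_hitting_lower_bound (n k : ℕ)
    (F : Fin k → (Antichain n → Antichain n → Prop)) (hF : IsHittingFamily F 3) :
    Real.logb 2 ((n : ℝ) - 1) ≤ k := by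
  apply Real.logb_le_of_abs_le_pow one_lt_two
  rcases Nat.eq_zero_or_pos n with rfl | hn
  · simp [one_le_pow₀]
  · have hcard : n - 1 ≤ 2 ^ k := by
      simpa [Antichain.card] using hF.card_sub_one_le_two_pow (⟨0, hn⟩ : Fin n)
        fun _ _ => Antichain.admissible_triple
    rw [abs_of_nonneg (sub_nonneg.mpr (Nat.one_le_cast.mpr hn))]
    have : (n : ℝ) ≤ 2 ^ k + 1 := by exact_mod_cast (by omega : n ≤ 2 ^ k + 1)
    linarith
end
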